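/- Let F, G, H : (0,∞) → ℝ be smooth functions such that for all t > 0 and all x ∈ ℝ: t·F′(t) + F(t) = 0; 2t·F(t)² − 5t²·G′(t) − 4tx·F′(t) − 4x·F(t) − 4t·G(t) = 0; and 4tx·F(t)² + 5t²·F(t)·G(t) − 25t³·H′(t) − 10t²x·G′(t) − 4tx²·F′(t) − 4x²·F(t) − 8tx·G(t) − 30t²·H(t) = 0. Define u(x,t) = F(t) − 6x/(5t), v(x,t) = G(t) + (4x/(5t))·u(x,t) + 12x²/(25t²), and w(x,t) = H(t) + (2x/(5t))·v(x,t) − (4x²/(25t²))·u(x,t) − 8x³/(125t³). Then (u, v, w) is a solution of (KB) on ℝ × (0,∞). -/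

import Mathlib

/-- Partial derivative with respect to the first (space) variable. -/
noncomputable def pdx (f : ℝ → ℝ → ℝ) (x t : ℝ) : ℝ := deriv (fun y => f y t) x

/-- Partial derivative with respect to the second (time) variable. -/
noncomputable def pdt (f : ℝ → ℝ → ℝ) (x t : ℝ) : ℝ := deriv (fun s => f x s) t

/-- The three-field Kaup–Boussinesq system (KB) holds for `(u,v,w)` at the point `(x,t)`:
`∂ₜu = (3/2)u∂ₓu + ∂ₓv`, `∂ₜv = v∂ₓu + (1/2)u∂ₓv + ∂ₓw`,
`∂ₜw = −(1/4)∂ₓ³u + w∂ₓu + (1/2)u∂ₓw`. -/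
def KBAt (u v w : ℝ → ℝ → ℝ) (x t : ℝ) : Prop :=
  pdt u x t = 3/2 * u x t * pdx u x t + pdx v x t ∧
  pdt v x t = v x t * pdx u x t + 1/2 * u x t * pdx v x t + pdx w x t ∧
  pdt w x t = -(1/4) * pdx (pdx (pdx u)) x t + w x t * pdx u x t
    + 1/2 * u x t * pdx w x t

/-- `f : ℝ × ℝ → ℝ` (curried) is smooth in both variables jointly. -/
def Smooth2 (f : ℝ → ℝ → ℝ) : Prop := ContDiff ℝ (⊤ : ℕ∞) (fun p : ℝ × ℝ => f p.1 p.2)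


lemma cubicDeriv (c0 c1 c2 c3 p : ℝ) :
    deriv (fun y : ℝ => c0 + (c1 * y + (c2 * y ^ 2 + c3 * y ^ 3))) p
      = c1 + 2 * c2 * p + 3 * c3 * p ^ 2 := by
  have h1 : HasDerivAt (fun y : ℝ => y) 1 p := hasDerivAt_id p
  have h2 : HasDerivAt (fun y : ℝ => y ^ 2) (2 * p) p := by
    simpa using hasDerivAt_pow 2 p
  have h3 : HasDerivAt (fun y : ℝ => y ^ 3) (3 * p ^ 2) p := by
    simpa using hasDerivAt_pow 3 p
  have H4 := ((h1.const_mul c1).add ((h2.const_mul c2).add (h3.const_mul c3))).const_add c0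
  exact H4.deriv.trans (by ring)

set_option maxHeartbeats 2000000 in
/-- If `F, G, H` are smooth on `(0,∞)` and satisfy the reduced system
of the Galilean-boost similarity reduction, then
`u = F(t) − 6x/(5t)`, `v = G(t) + (4x/(5t))u + 12x²/(25t²)`,
`w = H(t) + (2x/(5t))v − (4x²/(25t²))u − 8x³/(125t³)`
solve the three-field Kaup–Boussinesq system on `ℝ × (0,∞)`. -/
theorem stmt_9 (F G H : ℝ → ℝ)
    (hF : ContDiffOn ℝ (⊤ : ℕ∞) F (Set.Ioi 0)) (hG : ContDiffOn ℝ (⊤ : ℕ∞) G (Set.Ioi 0))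
    (hH : ContDiffOn ℝ (⊤ : ℕ∞) H (Set.Ioi 0))
    (h1 : ∀ t : ℝ, 0 < t → t * deriv F t + F t = 0)
    (h2 : ∀ t : ℝ, 0 < t → ∀ x : ℝ,
      2 * t * (F t)^2 - 5 * t^2 * deriv G t - 4 * t * x * deriv F t
        - 4 * x * F t - 4 * t * G t = 0)
    (h3 : ∀ t : ℝ, 0 < t → ∀ x : ℝ,
      4 * t * x * (F t)^2 + 5 * t^2 * F t * G t - 25 * t^3 * deriv H t
        - 10 * t^2 * x * deriv G t - 4 * t * x^2 * deriv F t - 4 * x^2 * F t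
        - 8 * t * x * G t - 30 * t^2 * H t = 0) :
    ∀ x t : ℝ, 0 < t →
      KBAt (fun x t => F t - 6 * x / (5 * t))
        (fun x t => G t + (4 * x / (5 * t)) * (F t - 6 * x / (5 * t))
          + 12 * x^2 / (25 * t^2))
        (fun x t => H t
          + (2 * x / (5 * t)) * (G t + (4 * x / (5 * t)) * (F t - 6 * x / (5 * t))
            + 12 * x^2 / (25 * t^2))
          - (4 * x^2 / (25 * t^2)) * (F t - 6 * x / (5 * t))
          - 8 * x^3 / (125 * t^3)) x t := by
  intro x t ht
  have ht' : t ≠ 0 := ne_of_gt ht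
  have hFd : HasDerivAt F (deriv F t) t :=
    ((hF.contDiffAt (isOpen_Ioi.mem_nhds ht)).differentiableAt (by simp)).hasDerivAt
  have hGd : HasDerivAt G (deriv G t) t :=
    ((hG.contDiffAt (isOpen_Ioi.mem_nhds ht)).differentiableAt (by simp)).hasDerivAt
  have hHd : HasDerivAt H (deriv H t) t :=
    ((hH.contDiffAt (isOpen_Ioi.mem_nhds ht)).differentiableAt (by simp)).hasDerivAt
  have ha' : deriv F t = -F t / t := by
    have k := h1 t ht
    field_simp
    linear_combination k
  have hg' : deriv G t = (2 * (F t) ^ 2 - 4 * G t) / (5 * t) := by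
    have k := h2 t ht 0
    rw [eq_div_iff (by positivity : (5 : ℝ) * t ≠ 0)]
    exact mul_left_cancel₀ ht' (by linear_combination -k)
  have hh' : deriv H t = (F t * G t - 6 * H t) / (5 * t) := by
    have k := h3 t ht 0
    rw [eq_div_iff (by positivity : (5 : ℝ) * t ≠ 0)]
    exact mul_left_cancel₀ (pow_ne_zero 2 ht') (by linear_combination -k / 5)
  -- space derivatives
  have pUx : ∀ p : ℝ, pdx (fun x t => F t - 6 * x / (5 * t)) p t = -6 / (5 * t) := by
    intro p
    have e : (fun y : ℝ => F t - 6 * y / (5 * t))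
        = (fun y : ℝ => F t + ((-6 / (5 * t)) * y + ((0:ℝ) * y ^ 2 + 0 * y ^ 3))) := by
      funext y; ring
    show deriv (fun y : ℝ => F t - 6 * y / (5 * t)) p = _
    rw [e, cubicDeriv]; ring
  have pVx : pdx (fun x t => G t + (4 * x / (5 * t)) * (F t - 6 * x / (5 * t)) + 12 * x^2 / (25 * t^2)) x t = 4 * F t / (5 * t) - 24 * x / (25 * t ^ 2) := by
    have e : (fun y : ℝ => G t + (4 * y / (5 * t)) * (F t - 6 * y / (5 * t)) + 12 * y^2 / (25 * t^2))
        = (fun y : ℝ => G t + ((4 * F t / (5 * t)) * y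
            + ((-12 / (25 * t ^ 2)) * y ^ 2 + (0:ℝ) * y ^ 3))) := by
      funext y; ring
    show deriv (fun y : ℝ => G t + (4 * y / (5 * t)) * (F t - 6 * y / (5 * t)) + 12 * y^2 / (25 * t^2)) x = _
    rw [e, cubicDeriv]; ring
  have pWx : pdx (fun x t => H t + (2 * x / (5 * t)) * (G t + (4 * x / (5 * t)) * (F t - 6 * x / (5 * t)) + 12 * x^2 / (25 * t^2)) - (4 * x^2 / (25 * t^2)) * (F t - 6 * x / (5 * t)) - 8 * x^3 / (125 * t^3)) x t = 2 * G t / (5 * t) + 8 * F t * x / (25 * t ^ 2)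
      - 24 * x ^ 2 / (125 * t ^ 3) := by
    have e : (fun y : ℝ => H t + (2 * y / (5 * t)) * (G t + (4 * y / (5 * t)) * (F t - 6 * y / (5 * t)) + 12 * y^2 / (25 * t^2)) - (4 * y^2 / (25 * t^2)) * (F t - 6 * y / (5 * t)) - 8 * y^3 / (125 * t^3))
        = (fun y : ℝ => H t + ((2 * G t / (5 * t)) * y
            + ((4 * F t / (25 * t ^ 2)) * y ^ 2 + (-8 / (125 * t ^ 3)) * y ^ 3))) := by
      funext y; ring
    show deriv (fun y : ℝ => H t + (2 * y / (5 * t)) * (G t + (4 * y / (5 * t)) * (F t - 6 * y / (5 * t)) + 12 * y^2 / (25 * t^2)) - (4 * y^2 / (25 * t^2)) * (F t - 6 * y / (5 * t)) - 8 * y^3 / (125 * t^3)) x = _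
    rw [e, cubicDeriv]; ring
  have pUxx : ∀ p : ℝ, pdx (pdx (fun x t => F t - 6 * x / (5 * t))) p t = 0 := by
    intro p
    have e : (fun y : ℝ => pdx (fun x t => F t - 6 * x / (5 * t)) y t) = (fun _ : ℝ => -6 / (5 * t)) :=
      funext fun y => pUx y
    show deriv (fun y : ℝ => pdx (fun x t => F t - 6 * x / (5 * t)) y t) p = 0
    rw [e]; exact deriv_const _ _
  have pUxxx : pdx (pdx (pdx (fun x t => F t - 6 * x / (5 * t)))) x t = 0 := by
    have e : (fun y : ℝ => pdx (pdx (fun x t => F t - 6 * x / (5 * t))) y t) = (fun _ : ℝ => (0 : ℝ)) :=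
      funext fun y => pUxx y
    show deriv (fun y : ℝ => pdx (pdx (fun x t => F t - 6 * x / (5 * t))) y t) x = 0
    rw [e]; exact deriv_const _ _
  -- time derivative building blocks
  have hden : HasDerivAt (fun s : ℝ => 5 * s) 5 t := by
    simpa using (hasDerivAt_id t).const_mul (5 : ℝ)
  have hden2 : HasDerivAt (fun s : ℝ => 25 * s ^ 2) (50 * t) t := by
    have h := (hasDerivAt_pow 2 t).const_mul (25 : ℝ)
    exact h.congr_deriv (by push_cast; ring)
  have hden3 : HasDerivAt (fun s : ℝ => 125 * s ^ 3) (375 * t ^ 2) t := by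
    have h := (hasDerivAt_pow 3 t).const_mul (125 : ℝ)
    exact h.congr_deriv (by push_cast; ring)
  have hne : (5 : ℝ) * t ≠ 0 := by positivity
  have hne2 : (25 : ℝ) * t ^ 2 ≠ 0 := by positivity
  have hne3 : (125 : ℝ) * t ^ 3 ≠ 0 := by positivity
  have HU : HasDerivAt (fun s : ℝ => F s - 6 * x / (5 * s))
      (deriv F t - (0 * (5 * t) - 6 * x * 5) / (5 * t) ^ 2) t :=
    hFd.sub ((hasDerivAt_const t (6 * x)).div hden hne)
  have pUt : pdt (fun x t => F t - 6 * x / (5 * t)) x t = deriv F t + 6 * x / (5 * t ^ 2) := by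
    show deriv (fun s : ℝ => F s - 6 * x / (5 * s)) t = _
    rw [HU.deriv]; field_simp; ring
  have HA : HasDerivAt (fun s : ℝ => 4 * x / (5 * s))
      ((0 * (5 * t) - 4 * x * 5) / (5 * t) ^ 2) t :=
    (hasDerivAt_const t (4 * x)).div hden hne
  have HC : HasDerivAt (fun s : ℝ => 12 * x ^ 2 / (25 * s ^ 2))
      ((0 * (25 * t ^ 2) - 12 * x ^ 2 * (50 * t)) / (25 * t ^ 2) ^ 2) t :=
    (hasDerivAt_const t (12 * x ^ 2)).div hden2 hne2
  have HV : HasDerivAt (fun s : ℝ => G s + (4 * x / (5 * s)) * (F s - 6 * x / (5 * s)) + 12 * x^2 / (25 * s^2))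
      (deriv G t + ((0 * (5 * t) - 4 * x * 5) / (5 * t) ^ 2 * (F t - 6 * x / (5 * t))
          + (4 * x / (5 * t)) * (deriv F t - (0 * (5 * t) - 6 * x * 5) / (5 * t) ^ 2))
        + (0 * (25 * t ^ 2) - 12 * x ^ 2 * (50 * t)) / (25 * t ^ 2) ^ 2) t :=
    (hGd.add (HA.mul HU)).add HC
  have pVt : pdt (fun x t => G t + (4 * x / (5 * t)) * (F t - 6 * x / (5 * t)) + 12 * x^2 / (25 * t^2)) x t = deriv G t + 4 * x * deriv F t / (5 * t)
      - 4 * x * F t / (5 * t ^ 2) + 24 * x ^ 2 / (25 * t ^ 3) := by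
    show deriv (fun s : ℝ => G s + (4 * x / (5 * s)) * (F s - 6 * x / (5 * s)) + 12 * x^2 / (25 * s^2)) t = _
    rw [HV.deriv]; field_simp; ring
  have HB : HasDerivAt (fun s : ℝ => 2 * x / (5 * s))
      ((0 * (5 * t) - 2 * x * 5) / (5 * t) ^ 2) t :=
    (hasDerivAt_const t (2 * x)).div hden hne
  have HD : HasDerivAt (fun s : ℝ => 4 * x ^ 2 / (25 * s ^ 2))
      ((0 * (25 * t ^ 2) - 4 * x ^ 2 * (50 * t)) / (25 * t ^ 2) ^ 2) t :=
    (hasDerivAt_const t (4 * x ^ 2)).div hden2 hne2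
  have HE : HasDerivAt (fun s : ℝ => 8 * x ^ 3 / (125 * s ^ 3))
      ((0 * (125 * t ^ 3) - 8 * x ^ 3 * (375 * t ^ 2)) / (125 * t ^ 3) ^ 2) t :=
    (hasDerivAt_const t (8 * x ^ 3)).div hden3 hne3
  have HW := ((hHd.add (HB.mul HV)).sub (HD.mul HU)).sub HE
  have pWt : pdt (fun x t => H t + (2 * x / (5 * t)) * (G t + (4 * x / (5 * t)) * (F t - 6 * x / (5 * t)) + 12 * x^2 / (25 * t^2)) - (4 * x^2 / (25 * t^2)) * (F t - 6 * x / (5 * t)) - 8 * x^3 / (125 * t^3)) x t = deriv H t + 2 * x * deriv G t / (5 * t)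
      - 2 * x * G t / (5 * t ^ 2) + 4 * x ^ 2 * deriv F t / (25 * t ^ 2)
      - 8 * x ^ 2 * F t / (25 * t ^ 3) + 24 * x ^ 3 / (125 * t ^ 4) := by
    show deriv (fun s : ℝ => H s + (2 * x / (5 * s)) * (G s + (4 * x / (5 * s)) * (F s - 6 * x / (5 * s)) + 12 * x^2 / (25 * s^2)) - (4 * x^2 / (25 * s^2)) * (F s - 6 * x / (5 * s)) - 8 * x^3 / (125 * s^3)) t = _
    refine HW.deriv.trans ?_; field_simp; ring
  refine ⟨?_, ?_, ?_⟩
  · rw [pUt, pUx, pVx, ha']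
    field_simp
    ring
  · rw [pVt, pVx, pUx, pWx, ha', hg']
    field_simp
    ring
  · rw [pWt, pUxxx, pUx, pWx, ha', hg', hh']
    field_simp
    ring
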